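/- arXiv:2603.06068 — 5 statements merged into one kernel-verified Lean document; each statement's English description precedes it below -/
import Mathlib

section
/- The monoid SL₂(ℕ) of 2×2 matrices with nonnegative integer entries and determinant 1 is freely generated (as a monoid) by the matrices A = [[1,1],[0,1]] and B = [[1,0],[1,1]]; that is, every such matrix can be written uniquely as a finite product of copies of A and B. -/
open Matrix

/-- The generator A = [[1,1],[0,1]]. -/
noncomputable def matA : Matrix (Fin 2) (Fin 2) ℤ := !![1, 1; 0, 1]

/-- The generator B = [[1,0],[1,1]]. -/
noncomputable def matB : Matrix (Fin 2) (Fin 2) ℤ := !![1, 0; 1, 1]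

/-- Interpret a word over {A, B} (encoded as a list of Booleans, `true` ↦ A,
`false` ↦ B) as a product of matrices. -/
noncomputable def wordProd (w : List Bool) : Matrix (Fin 2) (Fin 2) ℤ :=
  (w.map (fun b => if b then matA else matB)).prod

/-!
Left multiplication by `A` adds the second row to the first, and by `B` the first row to the
second. A matrix `[[a, b], [c, d]]` of SL₂(ℕ) other than the identity has one row dominating the
other entrywise (if `c < a` and `b < d`, then `ad ≥ (c + 1)(b + 1)` forces `b = c = 0`;
if `a < c` and `d < b`, the determinant would be negative), so subtracting the smaller row from
the larger one stays in SL₂(ℕ) and lowers the entry sum: this builds the word.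
Conversely, the first letter of any word for `M` is read off from which row of `M` has the larger
sum, and `A`, `B` are invertible, so the word is unique.
-/

theorem Matrix.sum_row_pos_of_nonneg_of_det_ne_zero {n R : Type*} [Fintype n] [DecidableEq n]
    [CommRing R] [PartialOrder R] [IsOrderedRing R] {N : Matrix n n R}
    (hN : ∀ i j, 0 ≤ N i j) (hdet : N.det ≠ 0) (i : n) : 0 < ∑ j, N i j := by
  refine (Finset.sum_nonneg fun j _ => hN i j).lt_of_ne' fun hsum => hdet ?_
  rw [Finset.sum_eq_zero_iff_of_nonneg fun j _ => hN i j] at hsum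
  exact det_eq_zero_of_row_eq_zero i fun j => hsum j (Finset.mem_univ j)

noncomputable def letter (b : Bool) : Matrix (Fin 2) (Fin 2) ℤ := if b then matA else matB

@[simp] theorem letter_true : letter true = matA := rfl

@[simp] theorem letter_false : letter false = matB := rfl

theorem wordProd_nil : wordProd [] = 1 := rfl

theorem wordProd_cons (b : Bool) (t : List Bool) :
    wordProd (b :: t) = letter b * wordProd t := by
  simp [wordProd, letter]

theorem matA_mul_of (a b c d : ℤ) : matA * !![a, b; c, d] = !![a + c, b + d; c, d] := by
  simp [matA]

theorem matB_mul_of (a b c d : ℤ) : matB * !![a, b; c, d] = !![a, b; a + c, b + d] := by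
  simp [matB]

theorem det_letter (b : Bool) : (letter b).det = 1 := by
  cases b <;> simp [matA, matB, det_fin_two_of]

theorem isUnit_letter (b : Bool) : IsUnit (letter b) :=
  (isUnit_iff_isUnit_det _).mpr (by rw [det_letter]; exact isUnit_one)

theorem wordProd_nonneg (w : List Bool) (i j : Fin 2) : 0 ≤ wordProd w i j := by
  induction w generalizing i j with
  | nil => rw [wordProd_nil, one_apply]; split_ifs <;> norm_num
  | cons b t ih =>
    rw [wordProd_cons, eta_fin_two (wordProd t)]
    cases b <;> simp only [letter_true, letter_false, matA_mul_of, matB_mul_of] <;>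
      fin_cases i <;> fin_cases j <;> simp <;> linarith [ih 0 0, ih 0 1, ih 1 0, ih 1 1]

theorem det_wordProd (w : List Bool) : (wordProd w).det = 1 := by
  induction w with
  | nil => simp [wordProd_nil]
  | cons b t ih => rw [wordProd_cons, det_mul, det_letter, ih, one_mul]

theorem rows_le_or_eq_one {a b c d : ℤ} (ha : 0 ≤ a) (hb : 0 ≤ b) (hc : 0 ≤ c) (hd : 0 ≤ d)
    (hdet : a * d - b * c = 1) :
    (c ≤ a ∧ d ≤ b) ∨ (a ≤ c ∧ b ≤ d) ∨ (a = 1 ∧ b = 0 ∧ c = 0 ∧ d = 1) := by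
  rcases le_or_gt c a with hca | hac
  · rcases le_or_gt d b with hdb | hbd
    · exact Or.inl ⟨hca, hdb⟩
    rcases hca.eq_or_lt with rfl | hca
    · exact Or.inr (Or.inl ⟨le_rfl, hbd.le⟩)
    have hbc : b = 0 ∧ c = 0 := by
      have : (c + 1) * (b + 1) ≤ a * d := mul_le_mul hca hbd (by omega) ha
      constructor <;> nlinarith
    obtain ⟨rfl, rfl⟩ := hbc
    have had : a * d = 1 := by linarith
    exact Or.inr (Or.inr ⟨Int.eq_one_of_mul_eq_one_right ha had,
      rfl, rfl, Int.eq_one_of_mul_eq_one_left hd had⟩)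
  · rcases le_or_gt b d with hbd | hdb
    · exact Or.inr (Or.inl ⟨hac.le, hbd⟩)
    have : (a + 1) * (d + 1) ≤ c * b := mul_le_mul hac hdb (by omega) hc
    nlinarith

theorem exists_wordProd_eq_of {a b c d : ℤ} (ha : 0 ≤ a) (hb : 0 ≤ b) (hc : 0 ≤ c) (hd : 0 ≤ d)
    (hdet : a * d - b * c = 1) : ∃ w, wordProd w = !![a, b; c, d] := by
  rcases rows_le_or_eq_one ha hb hc hd hdet with ⟨hca, hdb⟩ | ⟨hac, hbd⟩ | ⟨rfl, rfl, rfl, rfl⟩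
  · have hcd : 0 < c + d := by nlinarith
    obtain ⟨w, hw⟩ := exists_wordProd_eq_of (sub_nonneg.mpr hca) (sub_nonneg.mpr hdb) hc hd
      (by linarith)
    exact ⟨true :: w, by simp [wordProd_cons, hw, matA_mul_of]⟩
  · have hab : 0 < a + b := by nlinarith
    obtain ⟨w, hw⟩ := exists_wordProd_eq_of ha hb (sub_nonneg.mpr hac) (sub_nonneg.mpr hbd)
      (by linarith)
    exact ⟨false :: w, by simp [wordProd_cons, hw, matB_mul_of]⟩
  · exact ⟨[], by rw [wordProd_nil, one_fin_two]⟩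
termination_by (a + b + c + d).toNat
decreasing_by all_goals omega

def leadingLetter (M : Matrix (Fin 2) (Fin 2) ℤ) : Option Bool :=
  if M 1 0 + M 1 1 < M 0 0 + M 0 1 then some true
  else if M 0 0 + M 0 1 < M 1 0 + M 1 1 then some false
  else none

theorem leadingLetter_wordProd (w : List Bool) : leadingLetter (wordProd w) = w.head? := by
  cases w with
  | nil => simp [leadingLetter, wordProd_nil]
  | cons b t =>
    have hrow := sum_row_pos_of_nonneg_of_det_ne_zero (wordProd_nonneg t)
      (by rw [det_wordProd]; exact one_ne_zero)
    have h0 := hrow 0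
    have h1 := hrow 1
    simp only [Fin.sum_univ_two] at h0 h1
    rw [wordProd_cons, eta_fin_two (wordProd t)]
    cases b
    · simp only [letter_false, matB_mul_of, leadingLetter, List.head?_cons]
      rw [if_neg (by simp; omega), if_pos (by simp; omega)]
    · simp only [letter_true, matA_mul_of, leadingLetter, List.head?_cons]
      rw [if_pos (by simp; omega)]

theorem wordProd_injective : Function.Injective wordProd := by
  intro w w' h
  induction w generalizing w' with
  | nil =>
    cases w' with
    | nil => rfl
    | cons b' t' => simpa [leadingLetter_wordProd] using congrArg leadingLetter h
  | cons b t ih =>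
    cases w' with
    | nil => simpa [leadingLetter_wordProd] using congrArg leadingLetter h
    | cons b' t' =>
      obtain rfl : b = b' := by simpa [leadingLetter_wordProd] using congrArg leadingLetter h
      rw [wordProd_cons, wordProd_cons] at h
      rw [ih ((isUnit_letter b).mul_left_cancel h)]

/-- SL₂(ℕ) is freely generated as a monoid by A and B: every 2×2 matrix with
nonnegative integer entries and determinant 1 is the product of a unique finite
word in A and B. -/
theorem sl2_nat_free_monoid_on_A_B
    (M : Matrix (Fin 2) (Fin 2) ℤ)
    (hpos : ∀ i j, 0 ≤ M i j) (hdet : M.det = 1) :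
    ∃! w : List Bool, wordProd w = M := by
  obtain ⟨w, hw⟩ := exists_wordProd_eq_of (hpos 0 0) (hpos 0 1) (hpos 1 0) (hpos 1 1)
    (by rwa [det_fin_two] at hdet)
  rw [← eta_fin_two M] at hw
  exact ⟨w, hw, fun w' hw' => wordProd_injective (hw'.trans hw.symm)⟩
end

section
/- Tarski's Editors Property holds in SL₂(ℕ): if α, β, γ, δ ∈ SL₂(ℕ) satisfy αβ = γδ, then there exists η ∈ SL₂(ℕ) such that either (α = γη and ηβ = δ) or (αη = γ and β = ηδ). -/
open Matrix

/-!
SL₂(ℕ) is the free monoid on `L = !![1, 0; 1, 1]` and `R = !![1, 1; 0, 1]`: the two rows of a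
non-identity element are comparable entrywise, and the smaller row being the first (resp. second)
one says exactly that it factors as `L * M'` (resp. `R * M'`) inside SL₂(ℕ). A product `L * A` or
`R * B` of nonnegative matrices has its rows ordered the same way, so an invertible product
`α * β = γ * δ` determines the common first letter of `α` and `γ`. Cancelling it and recursing on
the entry sum of `α` ends when `α` or `γ` becomes the identity, and then the other one is `η`.
-/

theorem Matrix.mul_apply_nonneg {m n o α : Type*} [Fintype n] [Semiring α] [PartialOrder α]
    [IsOrderedRing α] {A : Matrix m n α} {B : Matrix n o α} (hA : ∀ i j, 0 ≤ A i j)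
    (hB : ∀ i j, 0 ≤ B i j) (i : m) (j : o) : 0 ≤ (A * B) i j :=
  Finset.sum_nonneg fun k _ => mul_nonneg (hA i k) (hB k j)

namespace SL2Nat

def L : Matrix (Fin 2) (Fin 2) ℤ := !![1, 0; 1, 1]

def R : Matrix (Fin 2) (Fin 2) ℤ := !![1, 1; 0, 1]

def entrySum (M : Matrix (Fin 2) (Fin 2) ℤ) : ℕ := (M 0 0 + M 0 1 + M 1 0 + M 1 1).toNat

lemma det_eq_one_of_eq_L_or_eq_R {G : Matrix (Fin 2) (Fin 2) ℤ} (hG : G = L ∨ G = R) :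
    G.det = 1 := by
  rcases hG with rfl | rfl <;> simp [L, R, det_fin_two_of]

lemma det_eq_zero_of_L_mul_eq_R_mul {A B : Matrix (Fin 2) (Fin 2) ℤ}
    (hA : ∀ i j, 0 ≤ A i j) (hB : ∀ i j, 0 ≤ B i j) (h : L * A = R * B) : (L * A).det = 0 := by
  have rows_eq : ∀ j, (L * A) 0 j = (L * A) 1 j := by
    intro j
    have h0 := congrFun (congrFun h 0) j
    have h1 := congrFun (congrFun h 1) j
    simp [L, R, mul_apply, Fin.sum_univ_two] at h0 h1 ⊢
    linarith [hA 1 j, hB 0 j]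
  rw [det_fin_two, rows_eq 0, rows_eq 1]
  ring

lemma eq_of_mul_eq_mul_of_det_ne_zero {G G' A B : Matrix (Fin 2) (Fin 2) ℤ}
    (hG : G = L ∨ G = R) (hG' : G' = L ∨ G' = R)
    (hA : ∀ i j, 0 ≤ A i j) (hB : ∀ i j, 0 ≤ B i j)
    (h : G * A = G' * B) (hdet : (G * A).det ≠ 0) : G = G' := by
  rcases hG with rfl | rfl <;> rcases hG' with rfl | rfl
  · rfl
  · exact absurd (det_eq_zero_of_L_mul_eq_R_mul hA hB h) hdet
  · exact absurd (h ▸ det_eq_zero_of_L_mul_eq_R_mul hB hA h.symm) hdet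
  · rfl

lemma rows_le_or_rows_ge {M : Matrix (Fin 2) (Fin 2) ℤ} (hM : ∀ i j, 0 ≤ M i j)
    (hdet : M.det = 1) (hne : M ≠ 1) :
    (∀ j, M 0 j ≤ M 1 j) ∨ (∀ j, M 1 j ≤ M 0 j) := by
  rw [det_fin_two] at hdet
  simp only [Fin.forall_fin_two]
  have := hM 0 0; have := hM 0 1; have := hM 1 0; have := hM 1 1
  rcases le_or_gt (M 0 0) (M 1 0) with hac | hca
  · exact Or.inl ⟨hac, by nlinarith⟩
  rcases le_or_gt (M 1 1) (M 0 1) with hdb | hbd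
  · exact Or.inr ⟨hca.le, hdb⟩
  -- `1 = det M ≥ (M 1 0 + 1) * (M 0 1 + 1) - M 0 1 * M 1 0` forces the off-diagonal to vanish.
  have hoff : M 0 1 = 0 ∧ M 1 0 = 0 := by constructor <;> nlinarith
  have hdiag : M 0 0 = 1 ∧ M 1 1 = 1 := by constructor <;> nlinarith
  exact absurd (by ext i j; fin_cases i <;> fin_cases j <;> simp [hoff, hdiag]) hne

lemma exists_eq_L_mul {M : Matrix (Fin 2) (Fin 2) ℤ} (hM : ∀ i j, 0 ≤ M i j)
    (hdet : M.det = 1) (hrows : ∀ j, M 0 j ≤ M 1 j) :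
    ∃ M', (∀ i j, 0 ≤ M' i j) ∧ M'.det = 1 ∧ M = L * M' ∧ entrySum M' < entrySum M := by
  rw [det_fin_two] at hdet
  refine ⟨!![M 0 0, M 0 1; M 1 0 - M 0 0, M 1 1 - M 0 1], ?_, ?_, ?_, ?_⟩
  · simp only [Fin.forall_fin_two]
    simp [hM, hrows]
  · rw [det_fin_two_of]
    linear_combination hdet
  · ext i j; fin_cases i <;> fin_cases j <;> simp [L, mul_apply, Fin.sum_univ_two]
  · have := hM 0 0; have := hM 0 1; have := hM 1 0; have := hM 1 1
    have : 0 < M 0 0 + M 0 1 := by nlinarith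
    simp only [entrySum, of_apply, cons_val', cons_val_zero, cons_val_one, empty_val',
      cons_val_fin_one]
    omega

lemma exists_eq_R_mul {M : Matrix (Fin 2) (Fin 2) ℤ} (hM : ∀ i j, 0 ≤ M i j)
    (hdet : M.det = 1) (hrows : ∀ j, M 1 j ≤ M 0 j) :
    ∃ M', (∀ i j, 0 ≤ M' i j) ∧ M'.det = 1 ∧ M = R * M' ∧ entrySum M' < entrySum M := by
  rw [det_fin_two] at hdet
  refine ⟨!![M 0 0 - M 1 0, M 0 1 - M 1 1; M 1 0, M 1 1], ?_, ?_, ?_, ?_⟩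
  · simp only [Fin.forall_fin_two]
    simp [hM, hrows]
  · rw [det_fin_two_of]
    linear_combination hdet
  · ext i j; fin_cases i <;> fin_cases j <;> simp [R, mul_apply, Fin.sum_univ_two]
  · have := hM 0 0; have := hM 0 1; have := hM 1 0; have := hM 1 1
    have : 0 < M 1 0 + M 1 1 := by nlinarith
    simp only [entrySum, of_apply, cons_val', cons_val_zero, cons_val_one, empty_val',
      cons_val_fin_one]
    omega

lemma exists_eq_L_or_R_mul {M : Matrix (Fin 2) (Fin 2) ℤ} (hM : ∀ i j, 0 ≤ M i j)
    (hdet : M.det = 1) (hne : M ≠ 1) :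
    ∃ G M', (G = L ∨ G = R) ∧ (∀ i j, 0 ≤ M' i j) ∧ M'.det = 1 ∧ M = G * M' ∧
      entrySum M' < entrySum M := by
  rcases rows_le_or_rows_ge hM hdet hne with hrows | hrows
  · obtain ⟨M', h⟩ := exists_eq_L_mul hM hdet hrows
    exact ⟨L, M', Or.inl rfl, h⟩
  · obtain ⟨M', h⟩ := exists_eq_R_mul hM hdet hrows
    exact ⟨R, M', Or.inr rfl, h⟩

end SL2Nat

open SL2Nat

/-- Tarski's Editors Property in SL₂(ℕ): if αβ = γδ then some η in SL₂(ℕ)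
edits one decomposition into the other. -/
theorem sl2_nat_editors_property
    (α β γ δ : Matrix (Fin 2) (Fin 2) ℤ)
    (hα : ∀ i j, 0 ≤ α i j) (hβ : ∀ i j, 0 ≤ β i j)
    (hγ : ∀ i j, 0 ≤ γ i j) (hδ : ∀ i j, 0 ≤ δ i j)
    (hdα : α.det = 1) (hdβ : β.det = 1) (hdγ : γ.det = 1)
    (hmul : α * β = γ * δ) :
    ∃ η : Matrix (Fin 2) (Fin 2) ℤ, (∀ i j, 0 ≤ η i j) ∧ η.det = 1 ∧
      ((α = γ * η ∧ η * β = δ) ∨ (α * η = γ ∧ β = η * δ)) := by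
  by_cases hα1 : α = 1
  · exact ⟨γ, hγ, hdγ, Or.inr ⟨by rw [hα1, one_mul], by rw [← hmul, hα1, one_mul]⟩⟩
  by_cases hγ1 : γ = 1
  · exact ⟨α, hα, hdα, Or.inl ⟨by rw [hγ1, one_mul], by rw [hmul, hγ1, one_mul]⟩⟩
  obtain ⟨G, α', hG, hα', hdα', hαG, hlt⟩ := exists_eq_L_or_R_mul hα hdα hα1
  obtain ⟨G', γ', hG', hγ', hdγ', rfl, -⟩ := exists_eq_L_or_R_mul hγ hdγ hγ1
  rw [hαG, mul_assoc, mul_assoc] at hmul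
  obtain rfl : G = G' := eq_of_mul_eq_mul_of_det_ne_zero hG hG' (mul_apply_nonneg hα' hβ)
    (mul_apply_nonneg hγ' hδ) hmul (by simp [det_mul, hdα', hdβ, det_eq_one_of_eq_L_or_eq_R hG])
  have hG_unit : IsUnit G :=
    (isUnit_iff_isUnit_det G).mpr (by simp [det_eq_one_of_eq_L_or_eq_R hG])
  obtain ⟨η, hη, hdη, h⟩ := sl2_nat_editors_property α' β γ' δ hα' hβ hγ' hδ hdα' hdβ hdγ'
    (hG_unit.mul_left_cancel hmul)
  refine ⟨η, hη, hdη, ?_⟩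
  rcases h with ⟨rfl, h⟩ | ⟨h, rfl⟩
  · exact Or.inl ⟨by rw [hαG, mul_assoc], h⟩
  · exact Or.inr ⟨by rw [hαG, mul_assoc, h], rfl⟩
termination_by entrySum α
end

section
/- For α, β ∈ SL₂(ℕ), there exists γ ∈ SL₂(ℕ) with β = αγ if and only if all four of the following inequalities hold: α₁₁β₀₀ ≥ α₀₁β₁₀, α₁₁β₀₁ ≥ α₀₁β₁₁, α₀₀β₁₀ ≥ α₁₀β₀₀, and α₀₀β₁₁ ≥ α₁₀β₀₁. -/
/-!
With `det α = 1` the inverse `α⁻¹` is the adjugate, so `β = α * γ` forces `γ = α⁻¹ * β`, whose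
entries are the four differences in the statement; conversely `α⁻¹ * β` has determinant
`det β = 1`, so it is a witness as soon as those entries are nonnegative.
-/

open Matrix

namespace Matrix

variable {n R : Type*} [Fintype n] [DecidableEq n] [CommRing R]

theorem inv_eq_adjugate_of_det_eq_one {A : Matrix n n R} (hA : A.det = 1) :
    A⁻¹ = A.adjugate := by
  rw [inv_def, hA, Ring.inverse_one, one_smul]

theorem exists_det_eq_one_and_eq_mul_iff (P : Matrix n n R → Prop) {A B : Matrix n n R}
    (hA : A.det = 1) (hB : B.det = 1) :
    (∃ C, P C ∧ C.det = 1 ∧ B = A * C) ↔ P (A⁻¹ * B) := by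
  have hA_unit : IsUnit A.det := hA ▸ isUnit_one
  constructor
  · rintro ⟨C, hC, -, rfl⟩
    rwa [nonsing_inv_mul_cancel_left _ _ hA_unit]
  · intro hP
    refine ⟨A⁻¹ * B, hP, ?_, (mul_nonsing_inv_cancel_left _ _ hA_unit).symm⟩
    rw [det_mul, det_nonsing_inv, hA, hB, Ring.inverse_one, one_mul]

theorem inv_mul_fin_two_of_det_eq_one {A : Matrix (Fin 2) (Fin 2) R} (hA : A.det = 1)
    (B : Matrix (Fin 2) (Fin 2) R) :
    A⁻¹ * B = !![A 1 1 * B 0 0 - A 0 1 * B 1 0, A 1 1 * B 0 1 - A 0 1 * B 1 1;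
                 A 0 0 * B 1 0 - A 1 0 * B 0 0, A 0 0 * B 1 1 - A 1 0 * B 0 1] := by
  rw [inv_eq_adjugate_of_det_eq_one hA, adjugate_fin_two]
  ext i j
  fin_cases i <;> fin_cases j <;>
    simp only [Fin.zero_eta, Fin.mk_one, mul_apply, of_apply, cons_val', cons_val_fin_one,
      cons_val_zero, cons_val_one, Fin.sum_univ_two, neg_mul] <;> ring

end Matrix

theorem sl2_nat_initial_substring_iff_general
    (α β : Matrix (Fin 2) (Fin 2) ℤ)
    (hdα : α.det = 1) (hdβ : β.det = 1) :
    (∃ γ : Matrix (Fin 2) (Fin 2) ℤ, (∀ i j, 0 ≤ γ i j) ∧ γ.det = 1 ∧ β = α * γ) ↔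
      (α 1 1 * β 0 0 ≥ α 0 1 * β 1 0 ∧
       α 1 1 * β 0 1 ≥ α 0 1 * β 1 1 ∧
       α 0 0 * β 1 0 ≥ α 1 0 * β 0 0 ∧
       α 0 0 * β 1 1 ≥ α 1 0 * β 0 1) := by
  rw [exists_det_eq_one_and_eq_mul_iff (fun γ => ∀ i j, 0 ≤ γ i j) hdα hdβ,
    inv_mul_fin_two_of_det_eq_one hdα]
  simp [Fin.forall_fin_two, and_assoc]

/-- In SL₂(ℕ), α is an initial substring of β (i.e. β = αγ for some γ in SL₂(ℕ))
iff the four stated inequalities hold, expressing that α⁻¹β has nonnegative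
entries. -/
theorem sl2_nat_initial_substring_iff
    (α β : Matrix (Fin 2) (Fin 2) ℤ)
    (hα : ∀ i j, 0 ≤ α i j) (hβ : ∀ i j, 0 ≤ β i j)
    (hdα : α.det = 1) (hdβ : β.det = 1) :
    (∃ γ : Matrix (Fin 2) (Fin 2) ℤ, (∀ i j, 0 ≤ γ i j) ∧ γ.det = 1 ∧ β = α * γ) ↔
      (α 1 1 * β 0 0 ≥ α 0 1 * β 1 0 ∧
       α 1 1 * β 0 1 ≥ α 0 1 * β 1 1 ∧
       α 0 0 * β 1 0 ≥ α 1 0 * β 0 0 ∧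
       α 0 0 * β 1 1 ≥ α 1 0 * β 0 1) :=
  sl2_nat_initial_substring_iff_general α β hdα hdβ
end

section
/- In ℤ, for any u₀ ≥ 1 and c ≥ 1: if for all positive integers i ≤ N we have (1 + i) ∣ u₀, then for any u such that (1 + i·u₀·c) ∣ u for all i ≤ N, the product (1 + u₀c)(1 + 2u₀c)⋯(1 + N·u₀c) divides u. (Pairwise coprimality of the factors 1 + i·u₀·c follows since (j−i) ∣ u₀ ∣ u₀c for i < j ≤ N.) -/
open Finset

/-- The arithmetical core of Jeřábek's argument: in ℤ, if every 1+i for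
1 ≤ i ≤ N divides u₀, and every 1 + i·u₀·c for 1 ≤ i ≤ N divides u, then the
product ∏_{i=1}^{N} (1 + i·u₀·c) divides u. -/
theorem product_of_shifted_multiples_dvd (u₀ c u : ℤ) (N : ℕ)
    (hu₀ : 1 ≤ u₀) (hc : 1 ≤ c) (hN : 0 < N)
    (hdiv₀ : ∀ i : ℤ, 1 ≤ i → i ≤ N → (1 + i) ∣ u₀)
    (hdiv : ∀ i : ℤ, 1 ≤ i → i ≤ N → (1 + i * u₀ * c) ∣ u) :
    (∏ i ∈ Finset.Icc (1 : ℤ) N, (1 + i * u₀ * c)) ∣ u := by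
  set v := u₀ * c with hv
  -- key: any d with 1 ≤ d ≤ N divides u₀ (hence v)
  have hdvd_u₀ : ∀ d : ℤ, 1 ≤ d → d ≤ N → d ∣ u₀ := by
    intro d hd1 hdN
    rcases eq_or_lt_of_le hd1 with h | h
    · exact h ▸ one_dvd u₀
    · have := hdiv₀ (d - 1) (by omega) (by omega)
      simpa using this
  -- coprimality of factors
  have hcop : ∀ i j : ℤ, 1 ≤ i → j ≤ N → i < j →
      IsCoprime (1 + i * v) (1 + j * v) := by
    intro i j hi hj hij
    have h1 : IsCoprime (1 + i * v) v := ⟨1, -i, by ring⟩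
    have hd : (j - i) ∣ v := (hdvd_u₀ (j - i) (by omega) (by omega)).mul_right c
    have h2 : IsCoprime (1 + i * v) (j - i) := h1.of_isCoprime_of_dvd_right hd
    have h3 : IsCoprime (1 + i * v) ((j - i) * v) := h2.mul_right h1
    have := h3.add_mul_left_right 1
    have heq : (j - i) * v + (1 + i * v) * 1 = 1 + j * v := by ring
    rwa [heq] at this
  apply Finset.prod_dvd_of_coprime
  · intro i hi j hj hne
    simp only [Finset.coe_Icc, Set.mem_Icc] at hi hj
    rcases lt_or_gt_of_ne hne with h | h
    · simpa [Function.onFun, hv, mul_assoc] using hcop i j hi.1 hj.2 h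
    · simpa [Function.onFun, hv, mul_assoc] using (hcop j i hj.1 hi.2 h).symm
  · intro i hi
    rw [Finset.mem_Icc] at hi
    exact hdiv i hi.1 hi.2
end

section
/- Every nonnegative integer solution pair (x, y) with x ≥ y of the equation x² − (n+2)xy + y² = 1 is of the form (s_{n,m}, s_{n,m−1}) for some m ≥ 1, where s_{n,m} is defined by s_{n,0}=0, s_{n,1}=1, s_{n,m+1}=(n+2)s_{n,m}−s_{n,m−1}. -/
/-!
Vieta jumping. If `(x, y)` solves `x² - (n+2)xy + y² = 1` with `x ≥ y > 0`, the other root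
`x' = (n+2)y - x` of the quadratic in `x` satisfies `x' x = y² - 1`, so `0 ≤ x' < y`, and
`(y, x')` is a smaller solution. Descending on `y` ends at `(1, 0) = (s₁, s₀)`, and the recurrence
climbs back up, since `x = (n+2)y - x'`.
-/

/-- The sequence s_{n,m}: s_{n,0}=0, s_{n,1}=1, s_{n,m+2}=(n+2)s_{n,m+1}−s_{n,m}. -/
def sSeq (n : ℤ) : ℕ → ℤ
  | 0 => 0
  | 1 => 1
  | (m + 2) => (n + 2) * sSeq n (m + 1) - sSeq n m

theorem pell_vieta_jump {n x y : ℤ} (hy : 0 < y) (hxy : y ≤ x)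
    (h : x ^ 2 - (n + 2) * x * y + y ^ 2 = 1) :
    0 ≤ (n + 2) * y - x ∧ (n + 2) * y - x < y ∧
      y ^ 2 - (n + 2) * y * ((n + 2) * y - x) + ((n + 2) * y - x) ^ 2 = 1 := by
  have hx : 0 < x := hy.trans_le hxy
  have hprod : ((n + 2) * y - x) * x = y ^ 2 - 1 := by linear_combination -h
  refine ⟨?_, ?_, by linear_combination h⟩
  · by_contra! hneg
    nlinarith
  · nlinarith

theorem exists_sSeq_of_pell {n x y : ℤ} (hy : 0 ≤ y) (hxy : y ≤ x)
    (h : x ^ 2 - (n + 2) * x * y + y ^ 2 = 1) :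
    ∃ m : ℕ, x = sSeq n (m + 1) ∧ y = sSeq n m := by
  rcases hy.eq_or_lt with rfl | hy
  · refine ⟨0, ?_, rfl⟩
    have hx : x ^ 2 = 1 := by linear_combination h
    rw [show x = 1 by nlinarith]
    rfl
  · obtain ⟨hx'₀, hx'y, h'⟩ := pell_vieta_jump hy hxy h
    obtain ⟨m, rfl, hx'⟩ := exists_sSeq_of_pell hx'₀ hx'y.le h'
    exact ⟨m + 1, by rw [sSeq, ← hx']; ring, rfl⟩
termination_by y.toNat

/-- Matiyasevich's characterization: every nonnegative solution (x, y) with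
x ≥ y of x² − (n+2)xy + y² = 1 is a pair of consecutive terms of the
sequence s_{n,·}. -/
theorem pell_solutions_are_sSeq (n : ℕ) (x y : ℤ)
    (hy : 0 ≤ y) (hxy : y ≤ x)
    (heq : x ^ 2 - ((n : ℤ) + 2) * x * y + y ^ 2 = 1) :
    ∃ m : ℕ, 1 ≤ m ∧ x = sSeq (n : ℤ) m ∧ y = sSeq (n : ℤ) (m - 1) := by
  obtain ⟨m, hx, hy⟩ := exists_sSeq_of_pell hy hxy heq
  exact ⟨m + 1, by omega, hx, hy⟩
end
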